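/- Let S be a nonempty set, (G, ·, d) a complete metric group whose metric d is invariant under left translations, φ : S → S, g : S → G, and let ε : S → ℝ≥0 be such that for every x ∈ S the series Σ_{n=0}^∞ ε(φⁿ(x)) converges, with sum Φ(x). If f : S → G satisfies d(f(φ(x)), g(x)·f(x)) ≤ ε(x) for all x ∈ S, then there exists a function f₀ : S → G with f₀(φ(x)) = g(x)·f₀(x) for all x ∈ S and d(f(x), f₀(x)) ≤ Φ(x) for all x ∈ S. -/
import Mathlib


theorem existence_linear_functional_equation
    {S G : Type*} [Nonempty S] [Group G] [MetricSpace G] [CompleteSpace G]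
    (hinv : ∀ x y z : G, dist (x * y) (x * z) = dist y z)
    (φ : S → S) (g : S → G) (ε : S → NNReal) (Φ : S → NNReal)
    (hΦ : ∀ x : S, HasSum (fun n : ℕ => ε (φ^[n] x)) (Φ x))
    (f : S → G) (hf : ∀ x : S, dist (f (φ x)) (g x * f x) ≤ ε x) :
    ∃ f₀ : S → G, (∀ x : S, f₀ (φ x) = g x * f₀ x) ∧
      ∀ x : S, dist (f x) (f₀ x) ≤ Φ x := by
  -- left multiplication is an isometry
  have hiso : ∀ c : G, Isometry (fun y : G => c * y) := by
    intro c
    exact Isometry.of_dist_eq fun a b => hinv c a b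
  -- partial products P x n = g (φ^[n-1] x) * ⋯ * g x
  let P : S → ℕ → G := fun x n => Nat.rec 1 (fun k p => g (φ^[k] x) * p) n
  have hP0 : ∀ x, P x 0 = 1 := fun x => rfl
  have hPsucc : ∀ x n, P x (n + 1) = g (φ^[n] x) * P x n := fun x n => rfl
  have hPshift : ∀ x n, P x (n + 1) = P (φ x) n * g x := by
    intro x n
    induction n with
    | zero => rw [hPsucc, hP0, hP0, Function.iterate_zero_apply]; simp
    | succ k ih =>
        rw [hPsucc, ih, hPsucc, Function.iterate_succ_apply, ← mul_assoc]
  -- the approximating sequence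
  let u : S → ℕ → G := fun x n => (P x n)⁻¹ * f (φ^[n] x)
  have key : ∀ x n, dist (u x (n + 1)) (u x n) ≤ ε (φ^[n] x) := by
    intro x n
    have h1 : dist (u x (n + 1)) (u x n)
        = dist (P x (n + 1) * u x (n + 1)) (P x (n + 1) * u x n) :=
      (hinv _ _ _).symm
    have h2 : P x (n + 1) * u x (n + 1) = f (φ^[n + 1] x) := by
      simp [u, ← mul_assoc]
    have h3 : P x (n + 1) * u x n = g (φ^[n] x) * f (φ^[n] x) := by
      simp [u, hPsucc, mul_assoc]
    rw [h1, h2, h3, Function.iterate_succ_apply']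
    exact hf (φ^[n] x)
  have hsummable : ∀ x, Summable (fun n : ℕ => (ε (φ^[n] x) : ℝ)) :=
    fun x => ⟨(Φ x : ℝ), NNReal.hasSum_coe.mpr (hΦ x)⟩
  have hcauchy : ∀ x, CauchySeq (u x) := by
    intro x
    apply cauchySeq_of_dist_le_of_summable (fun n => (ε (φ^[n] x) : ℝ))
    · intro n
      rw [dist_comm]
      exact key x n
    · exact hsummable x
  choose f₀ hf₀ using fun x => cauchySeq_tendsto_of_complete (hcauchy x)
  refine ⟨f₀, ?_, ?_⟩
  · intro x
    -- u (φ x) n = g x * u x (n + 1)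
    have hshift : ∀ n, u (φ x) n = g x * u x (n + 1) := by
      intro n
      simp only [u, hPshift, Function.iterate_succ_apply, mul_inv_rev, mul_assoc,
        mul_inv_cancel_left]
    have h1 : Filter.Tendsto (u (φ x)) Filter.atTop (nhds (f₀ (φ x))) := hf₀ (φ x)
    have h2 : Filter.Tendsto (fun n => u x (n + 1)) Filter.atTop (nhds (f₀ x)) :=
      (hf₀ x).comp (Filter.tendsto_add_atTop_nat 1)
    have h3 : Filter.Tendsto (fun n => g x * u x (n + 1)) Filter.atTop
        (nhds (g x * f₀ x)) := ((hiso (g x)).continuous.tendsto _).comp h2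
    have h4 : Filter.Tendsto (u (φ x)) Filter.atTop (nhds (g x * f₀ x)) :=
      h3.congr fun n => (hshift n).symm
    exact tendsto_nhds_unique h1 h4
  · intro x
    have hb := dist_le_tsum_of_dist_le_of_tendsto₀
      (f := u x) (fun n => (ε (φ^[n] x) : ℝ))
      (fun n => by rw [dist_comm]; exact key x n) (hsummable x) (hf₀ x)
    have hu0 : u x 0 = f x := by simp [u, hP0]
    have htsum : (∑' n : ℕ, (ε (φ^[n] x) : ℝ)) = (Φ x : ℝ) :=
      (NNReal.hasSum_coe.mpr (hΦ x)).tsum_eq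
    rw [hu0, htsum] at hb
    exact hb
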